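/- arXiv:1912.12091 — 2 statements merged into one kernel-verified Lean document; each statement's English description precedes it below -/
import Mathlib

section
/- Let X₁,…,Xₙ be independent random variables with finite second moments, Bₙ² = Σₖ E[Xₖ²] > 0 (here each E[Xₖ]=0 so σₖ² = E[Xₖ²]). Define Lₙ(ε) = Bₙ⁻² Σₖ E[Xₖ²·1(|Xₖ| ≥ εBₙ)] and Λₙ(ε) = Bₙ⁻³ Σₖ E[|Xₖ|³·1(|Xₖ| < εBₙ)]. Then Lₙ(1) + Λₙ(1) = inf over ε > 0 of (Lₙ(ε) + Λₙ(ε)). -/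
open MeasureTheory Set ProbabilityTheory

/-!
For fixed `x`, the summand of `Lₙ(ε) + Λₙ(ε)` is either `x² / Bₙ²` or `|x|³ / Bₙ³`,
and at `ε = 1` it is always the smaller of the two, since `|x|³ / Bₙ³ ≤ x² / Bₙ²` exactly
when `|x| ≤ Bₙ`. Integrating and summing gives `Lₙ(1) + Λₙ(1) ≤ Lₙ(ε) + Λₙ(ε)` for every
`ε`, so the infimum is attained at `ε = 1`.
-/

noncomputable def osipovTerm (B ε x : ℝ) : ℝ :=
  (if ε * B ≤ |x| then x ^ 2 else 0) / B ^ 2 + (if |x| < ε * B then |x| ^ 3 else 0) / B ^ 3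

lemma osipovTerm_eq_or (B ε x : ℝ) :
    osipovTerm B ε x = x ^ 2 / B ^ 2 ∨ osipovTerm B ε x = |x| ^ 3 / B ^ 3 := by
  rcases le_or_gt (ε * B) |x| with h | h
  · simp [osipovTerm, h, h.not_gt]
  · simp [osipovTerm, h, h.not_ge]

lemma pow_three_div_eq_sq_div_mul (B t : ℝ) (hB : B ≠ 0) :
    t ^ 3 / B ^ 3 = t ^ 2 / B ^ 2 * (t / B) := by
  field_simp

lemma osipovTerm_one_eq_min {B : ℝ} (hB : 0 < B) (x : ℝ) :
    osipovTerm B 1 x = min (x ^ 2 / B ^ 2) (|x| ^ 3 / B ^ 3) := by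
  rw [← sq_abs x, pow_three_div_eq_sq_div_mul B |x| hB.ne']
  have hsq : 0 ≤ |x| ^ 2 / B ^ 2 := by positivity
  rcases le_or_gt B |x| with h | h
  · rw [min_eq_left (le_mul_of_one_le_right hsq ((one_le_div hB).2 h))]
    simp [osipovTerm, h, h.not_gt]
  · rw [min_eq_right (mul_le_of_le_one_right hsq ((div_le_one hB).2 h.le)),
      ← pow_three_div_eq_sq_div_mul B |x| hB.ne']
    simp [osipovTerm, h, h.not_ge]

lemma osipovTerm_one_le {B : ℝ} (hB : 0 < B) (ε x : ℝ) :
    osipovTerm B 1 x ≤ osipovTerm B ε x := by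
  rw [osipovTerm_one_eq_min hB]
  rcases osipovTerm_eq_or B ε x with h | h <;> rw [h]
  exacts [min_le_left _ _, min_le_right _ _]

section Integrability

variable {Ω : Type*} [MeasurableSpace Ω] {μ : Measure Ω} {Y : Ω → ℝ}

lemma aestronglyMeasurable_comp_abs_of_integrable_sq (hY : Integrable (fun ω => Y ω ^ 2) μ)
    {g : ℝ → ℝ} (hg : Measurable g) : AEStronglyMeasurable (fun ω => g |Y ω|) μ := by
  have habs : AEMeasurable (fun ω => |Y ω|) μ := by
    simpa only [Real.sqrt_sq_eq_abs] using hY.aemeasurable.sqrt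
  exact (hg.comp_aemeasurable habs).aestronglyMeasurable

lemma integrable_ite_le_abs_sq (hY : Integrable (fun ω => Y ω ^ 2) μ) (c : ℝ) :
    Integrable (fun ω => if c ≤ |Y ω| then Y ω ^ 2 else 0) μ := by
  refine hY.mono' ?_ (ae_of_all _ fun ω => ?_)
  · have hg : Measurable fun t : ℝ => if c ≤ t then t ^ 2 else 0 :=
      Measurable.ite (measurableSet_le measurable_const measurable_id)
        (measurable_id.pow_const 2) measurable_const
    simpa only [sq_abs] using aestronglyMeasurable_comp_abs_of_integrable_sq hY hg
  · split_ifs <;> simp [sq_nonneg]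

lemma integrable_ite_abs_lt_abs_pow_three (hY : Integrable (fun ω => Y ω ^ 2) μ) (c : ℝ) :
    Integrable (fun ω => if |Y ω| < c then |Y ω| ^ 3 else 0) μ := by
  refine (hY.const_mul |c|).mono' ?_ (ae_of_all _ fun ω => ?_)
  · have hg : Measurable fun t : ℝ => if t < c then t ^ 3 else 0 :=
      Measurable.ite (measurableSet_lt measurable_id measurable_const)
        (measurable_id.pow_const 3) measurable_const
    exact aestronglyMeasurable_comp_abs_of_integrable_sq hY hg
  · rw [Real.norm_eq_abs, ← sq_abs (Y ω)]
    split_ifs with h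
    · rw [abs_of_nonneg (by positivity)]
      calc |Y ω| ^ 3 = |Y ω| * |Y ω| ^ 2 := by ring
        _ ≤ |c| * |Y ω| ^ 2 :=
          mul_le_mul_of_nonneg_right (h.le.trans (le_abs_self c)) (sq_nonneg _)
    · simp only [abs_zero]; positivity

lemma integral_osipovTerm (hY : Integrable (fun ω => Y ω ^ 2) μ) (B ε : ℝ) :
    ∫ ω, osipovTerm B ε (Y ω) ∂μ
      = (∫ ω, if ε * B ≤ |Y ω| then Y ω ^ 2 else 0 ∂μ) / B ^ 2
        + (∫ ω, if |Y ω| < ε * B then |Y ω| ^ 3 else 0 ∂μ) / B ^ 3 := by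
  rw [← integral_div, ← integral_div]
  exact integral_add ((integrable_ite_le_abs_sq hY _).div_const _)
    ((integrable_ite_abs_lt_abs_pow_three hY _).div_const _)

lemma integrable_osipovTerm (hY : Integrable (fun ω => Y ω ^ 2) μ) (B ε : ℝ) :
    Integrable (fun ω => osipovTerm B ε (Y ω)) μ :=
  ((integrable_ite_le_abs_sq hY _).div_const _).add
    ((integrable_ite_abs_lt_abs_pow_three hY _).div_const _)

end Integrability

theorem osipov_infimum_at_one_general {Ω : Type*} [MeasureSpace Ω]
    {n : ℕ} (X : Fin n → Ω → ℝ)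
    (hint : ∀ k, Integrable fun ω => (X k ω) ^ 2)
    (Bn : ℝ) (hBn : 0 < Bn)
    (L Λ : ℝ → ℝ)
    (hL : ∀ ε, L ε = (∑ k, ∫ ω, if ε * Bn ≤ |X k ω| then (X k ω) ^ 2 else 0) / Bn ^ 2)
    (hΛ : ∀ ε, Λ ε = (∑ k, ∫ ω, if |X k ω| < ε * Bn then |X k ω| ^ 3 else 0) / Bn ^ 3) :
    L 1 + Λ 1 = sInf ((fun ε => L ε + Λ ε) '' Ioi 0) := by
  have hsum : ∀ ε, L ε + Λ ε = ∑ k, ∫ ω, osipovTerm Bn ε (X k ω) := by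
    intro ε
    simp only [hL, hΛ, integral_osipovTerm (hint _), Finset.sum_add_distrib, Finset.sum_div]
  have hleast : IsLeast ((fun ε => L ε + Λ ε) '' Ioi 0) (L 1 + Λ 1) := by
    refine ⟨⟨1, mem_Ioi.2 one_pos, rfl⟩, ?_⟩
    rintro _ ⟨ε, -, rfl⟩
    simp only [hsum]
    exact Finset.sum_le_sum fun k _ => integral_mono (integrable_osipovTerm (hint k) _ _)
      (integrable_osipovTerm (hint k) _ _) (osipovTerm_one_le hBn ε <| X k ·)
  exact hleast.csInf_eq.symm

/-- For independent mean-zero r.v.'s with finite second moments, the sum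
`Lₙ(1) + Λₙ(1)` is the infimum over `ε > 0` of `Lₙ(ε) + Λₙ(ε)`, where
`Lₙ` is the Lindeberg fraction and `Λₙ` the normalized truncated third
absolute moments. -/
theorem osipov_infimum_at_one {Ω : Type*} [MeasureSpace Ω]
    [IsProbabilityMeasure (ℙ : Measure Ω)]
    {n : ℕ} (X : Fin n → Ω → ℝ) (hmeas : ∀ k, Measurable (X k))
    (hindep : iIndepFun X ℙ)
    (hint : ∀ k, Integrable fun ω => (X k ω) ^ 2)
    (hmean : ∀ k, (∫ ω, X k ω) = 0)
    (Bn : ℝ) (hBn : 0 < Bn) (hBdef : Bn ^ 2 = ∑ k, ∫ ω, (X k ω) ^ 2)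
    (L Λ : ℝ → ℝ)
    (hL : ∀ ε, L ε = (∑ k, ∫ ω, if ε * Bn ≤ |X k ω| then (X k ω) ^ 2 else 0) / Bn ^ 2)
    (hΛ : ∀ ε, Λ ε = (∑ k, ∫ ω, if |X k ω| < ε * Bn then |X k ω| ^ 3 else 0) / Bn ^ 3) :
    L 1 + Λ 1 = sInf ((fun ε => L ε + Λ ε) '' Ioi 0) :=
  osipov_infimum_at_one_general X hint Bn hBn L Λ hL hΛ
end

section
/- With g₁(z) = max{z, Bₙ} and the Rozovskii-type fraction L_{R,n}(g,ε,γ) = γ·(g(εBₙ)/(ε·g(Bₙ)))·|Mₙ(ε)| + sup_{0<z<ε} (g(zBₙ)/g(Bₙ))·Lₙ(z), one has 1 ≤ L_{R,n}(g₁,ε,γ) ≤ max{ε,1}·(γ+1) for all ε > 0 and γ > 0. -/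
/-!
The weight `g₁` turns both terms of the fraction into elementary quantities:
`g₁(zBₙ)/g₁(Bₙ) = max z 1` and `g₁(εBₙ)/(ε g₁(Bₙ)) = max ε 1 / ε`.
The cubic term is at most `max ε 1 · γ` because `|Mₙ(ε)| ≤ ε`
(on `|Xₖ| < εBₙ` one has `|Xₖ|³ ≤ εBₙ Xₖ²`), and `max z 1 · Lₙ(z) ≤ max ε 1` on `(0, ε)`
since `Lₙ ≤ 1`. For the lower bound, `Lₙ(z) → Lₙ(0) = 1` as `z → 0⁺` by dominated
convergence, so the supremum is at least `1`.
-/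

open ProbabilityTheory MeasureTheory Set Filter Topology

section Truncation

variable {Ω : Type*} [MeasurableSpace Ω] {μ : Measure Ω} {Y : Ω → ℝ}

theorem integral_ite_sq_nonneg (p : Ω → Prop) [DecidablePred p] :
    0 ≤ ∫ ω, (if p ω then Y ω ^ 2 else 0) ∂μ :=
  integral_nonneg fun ω => by split_ifs <;> positivity

theorem integral_ite_sq_le (hY : Integrable (fun ω => Y ω ^ 2) μ) (p : Ω → Prop)
    [DecidablePred p] : ∫ ω, (if p ω then Y ω ^ 2 else 0) ∂μ ≤ ∫ ω, Y ω ^ 2 ∂μ :=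
  integral_mono_of_nonneg
    (.of_forall fun ω => by dsimp only [Pi.zero_apply]; split_ifs <;> positivity) hY
    (.of_forall fun ω => by dsimp only; split_ifs <;> simp [sq_nonneg])

theorem abs_integral_ite_cube_le (hY : Integrable (fun ω => Y ω ^ 2) μ) {c : ℝ} (hc : 0 ≤ c) :
    |∫ ω, (if |Y ω| < c then Y ω ^ 3 else 0) ∂μ| ≤ c * ∫ ω, Y ω ^ 2 ∂μ := by
  have hpoint : ∀ ω, |if |Y ω| < c then Y ω ^ 3 else 0| ≤ c * Y ω ^ 2 := fun ω => by
    split_ifs with h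
    · rw [abs_pow, pow_succ', ← sq_abs (Y ω)]
      exact mul_le_mul_of_nonneg_right h.le (sq_nonneg _)
    · simp only [abs_zero]
      positivity
  calc |∫ ω, (if |Y ω| < c then Y ω ^ 3 else 0) ∂μ|
      ≤ ∫ ω, |if |Y ω| < c then Y ω ^ 3 else 0| ∂μ := abs_integral_le_integral_abs
    _ ≤ ∫ ω, c * Y ω ^ 2 ∂μ :=
        integral_mono_of_nonneg (.of_forall fun _ => abs_nonneg _) (hY.const_mul c)
          (.of_forall hpoint)
    _ = c * ∫ ω, Y ω ^ 2 ∂μ := integral_const_mul c _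

theorem tendsto_ite_le_abs_sq (y : ℝ) :
    Tendsto (fun c : ℝ => if c ≤ |y| then y ^ 2 else 0) (𝓝[>] 0) (𝓝 (y ^ 2)) := by
  rcases eq_or_ne y 0 with rfl | hy
  · simp
  · refine tendsto_const_nhds.congr' ?_
    filter_upwards [nhdsWithin_le_nhds (eventually_lt_nhds (abs_pos.mpr hy))] with c hc
    rw [if_pos hc.le]

theorem tendsto_integral_ite_le_abs_sq (hYm : Measurable Y)
    (hY : Integrable (fun ω => Y ω ^ 2) μ) :
    Tendsto (fun c => ∫ ω, (if c ≤ |Y ω| then Y ω ^ 2 else 0) ∂μ) (𝓝[>] 0)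
      (𝓝 (∫ ω, Y ω ^ 2 ∂μ)) := by
  refine tendsto_integral_filter_of_dominated_convergence _ (.of_forall fun c => ?_)
    (.of_forall fun c => .of_forall fun ω => ?_) hY
    (.of_forall fun ω => tendsto_ite_le_abs_sq _)
  · exact (Measurable.ite (measurableSet_le measurable_const hYm.abs) (hYm.pow_const 2)
      measurable_const).aestronglyMeasurable
  · split_ifs <;> simp [sq_nonneg]

theorem abs_sum_integral_ite_cube_le {ι : Type*} (s : Finset ι) {X : ι → Ω → ℝ}
    (hX : ∀ k, Integrable (fun ω => X k ω ^ 2) μ) {c : ℝ} (hc : 0 ≤ c) :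
    |∑ k ∈ s, ∫ ω, (if |X k ω| < c then X k ω ^ 3 else 0) ∂μ| ≤
      c * ∑ k ∈ s, ∫ ω, X k ω ^ 2 ∂μ :=
  calc _ ≤ ∑ k ∈ s, |∫ ω, (if |X k ω| < c then X k ω ^ 3 else 0) ∂μ| :=
        Finset.abs_sum_le_sum_abs _ _
    _ ≤ ∑ k ∈ s, c * ∫ ω, X k ω ^ 2 ∂μ :=
        Finset.sum_le_sum fun k _ => abs_integral_ite_cube_le (hX k) hc
    _ = c * ∑ k ∈ s, ∫ ω, X k ω ^ 2 ∂μ := (Finset.mul_sum _ _ _).symm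

theorem tendsto_sum_integral_ite_mul_le_abs_sq {ι : Type*} (s : Finset ι) {X : ι → Ω → ℝ}
    (hXm : ∀ k, Measurable (X k)) (hX : ∀ k, Integrable (fun ω => X k ω ^ 2) μ) {b : ℝ}
    (hb : 0 < b) :
    Tendsto (fun z => ∑ k ∈ s, ∫ ω, (if z * b ≤ |X k ω| then X k ω ^ 2 else 0) ∂μ) (𝓝[>] 0)
      (𝓝 (∑ k ∈ s, ∫ ω, X k ω ^ 2 ∂μ)) := by
  have hscale : Tendsto (fun z => z * b) (𝓝[>] 0) (𝓝[>] 0) := by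
    simpa using Filter.TendstoNhdsWithinIoi.mul_const hb (tendsto_id (x := 𝓝[>] (0 : ℝ)))
  exact tendsto_finsetSum s fun k _ =>
    (tendsto_integral_ite_le_abs_sq (hXm k) (hX k)).comp hscale

end Truncation

section RealBounds

variable {L : ℝ → ℝ}

theorem max_mul_mem_upperBounds_image (hL₀ : ∀ z, 0 ≤ L z) (hL₁ : ∀ z, L z ≤ 1) (ε : ℝ) :
    max ε 1 ∈ upperBounds ((fun z => max z 1 * L z) '' Ioo 0 ε) := by
  rintro _ ⟨z, hz, rfl⟩
  calc max z 1 * L z ≤ max ε 1 * 1 := by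
        gcongr
        exacts [hL₀ z, hz.2.le, hL₁ z]
    _ = max ε 1 := mul_one _

theorem sSup_image_max_mul_le (hL₀ : ∀ z, 0 ≤ L z) (hL₁ : ∀ z, L z ≤ 1) (ε : ℝ) :
    sSup ((fun z => max z 1 * L z) '' Ioo 0 ε) ≤ max ε 1 :=
  Real.sSup_le (max_mul_mem_upperBounds_image hL₀ hL₁ ε) (by positivity)

theorem one_le_sSup_image_max_mul (hL₀ : ∀ z, 0 ≤ L z) (hL₁ : ∀ z, L z ≤ 1)
    (hL : Tendsto L (𝓝[>] 0) (𝓝 1)) {ε : ℝ} (hε : 0 < ε) :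
    1 ≤ sSup ((fun z => max z 1 * L z) '' Ioo 0 ε) := by
  refine le_of_tendsto hL ?_
  filter_upwards [Ioo_mem_nhdsGT hε] with z hz
  exact (le_mul_of_one_le_left (hL₀ z) (le_max_right z 1)).trans
    (le_csSup ⟨_, max_mul_mem_upperBounds_image hL₀ hL₁ ε⟩ ⟨z, hz, rfl⟩)

theorem mul_div_mul_abs_le {a γ ε m : ℝ} (ha : 0 ≤ a) (hγ : 0 ≤ γ) (hε : 0 < ε)
    (hm : |m| ≤ ε) : γ * (a / ε) * |m| ≤ a * γ :=
  calc γ * (a / ε) * |m| ≤ γ * (a / ε) * ε := by gcongr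
    _ = a * γ := by field_simp

end RealBounds

theorem rozovskii_fraction_g1_bounds_general {Ω : Type*} [MeasureSpace Ω]
    {n : ℕ} (X : Fin n → Ω → ℝ) (hmeas : ∀ k, Measurable (X k))
    (hint : ∀ k, Integrable fun ω => (X k ω) ^ 2)
    (Bn : ℝ) (hBn : 0 < Bn) (hBdef : Bn ^ 2 = ∑ k, ∫ ω, (X k ω) ^ 2)
    (M L : ℝ → ℝ)
    (hM : ∀ z, M z = (∑ k, ∫ ω, if |X k ω| < z * Bn then (X k ω) ^ 3 else 0) / Bn ^ 3)
    (hL : ∀ z, L z = (∑ k, ∫ ω, if z * Bn ≤ |X k ω| then (X k ω) ^ 2 else 0) / Bn ^ 2)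
    (g₁ : ℝ → ℝ) (hg₁ : ∀ z, g₁ z = max z Bn)
    (ε γ : ℝ) (hε : 0 < ε) (hγ : 0 < γ) :
    1 ≤ γ * (g₁ (ε * Bn) / (ε * g₁ Bn)) * |M ε| +
          sSup ((fun z => g₁ (z * Bn) / g₁ Bn * L z) '' Ioo 0 ε) ∧
    γ * (g₁ (ε * Bn) / (ε * g₁ Bn)) * |M ε| +
          sSup ((fun z => g₁ (z * Bn) / g₁ Bn * L z) '' Ioo 0 ε) ≤
      max ε 1 * (γ + 1) := by
  have hB2 : 0 < Bn ^ 2 := by positivity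
  have hL₀ (z : ℝ) : 0 ≤ L z := by
    rw [hL]
    exact div_nonneg (Finset.sum_nonneg fun k _ => integral_ite_sq_nonneg _) hB2.le
  have hL₁ (z : ℝ) : L z ≤ 1 := by
    rw [hL, div_le_one hB2, hBdef]
    exact Finset.sum_le_sum fun k _ => integral_ite_sq_le (hint k) _
  have hLlim : Tendsto L (𝓝[>] 0) (𝓝 1) := by
    have h :=
      (tendsto_sum_integral_ite_mul_le_abs_sq .univ hmeas hint hBn).div_const (Bn ^ 2)
    rw [← hBdef, div_self hB2.ne'] at h
    exact h.congr fun z => (hL z).symm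
  have hM₁ : |M ε| ≤ ε := by
    rw [hM, abs_div, abs_of_pos (pow_pos hBn 3), div_le_iff₀ (pow_pos hBn 3)]
    calc _ ≤ ε * Bn * Bn ^ 2 :=
          hBdef ▸ abs_sum_integral_ite_cube_le _ hint (by positivity)
      _ = ε * Bn ^ 3 := by ring
  have hratio (z : ℝ) : g₁ (z * Bn) / g₁ Bn = max z 1 := by
    rw [hg₁, hg₁, max_self, div_eq_iff hBn.ne', max_mul_of_nonneg _ _ hBn.le, one_mul]
  have hcoef : g₁ (ε * Bn) / (ε * g₁ Bn) = max ε 1 / ε := by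
    rw [← div_div, div_right_comm, hratio]
  simp only [hratio, hcoef]
  have hcubic₀ : 0 ≤ γ * (max ε 1 / ε) * |M ε| := by positivity
  have hcubic := mul_div_mul_abs_le (a := max ε 1) (by positivity) hγ.le hε hM₁
  have hsup₁ := one_le_sSup_image_max_mul hL₀ hL₁ hLlim hε
  have hsup₂ := sSup_image_max_mul_le hL₀ hL₁ ε
  constructor <;> linarith

/-- With `g₁(z) = max{z, Bₙ}`, the Rozovskii-type fraction satisfies
`1 ≤ L_{R,n}(g₁,ε,γ) ≤ max{ε,1}·(γ+1)` for all `ε, γ > 0`. -/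
theorem rozovskii_fraction_g1_bounds {Ω : Type*} [MeasureSpace Ω]
    [IsProbabilityMeasure (ℙ : Measure Ω)]
    {n : ℕ} (X : Fin n → Ω → ℝ) (hmeas : ∀ k, Measurable (X k))
    (hint : ∀ k, Integrable fun ω => (X k ω) ^ 2)
    (hmean : ∀ k, (∫ ω, X k ω) = 0)
    (Bn : ℝ) (hBn : 0 < Bn) (hBdef : Bn ^ 2 = ∑ k, ∫ ω, (X k ω) ^ 2)
    (M L : ℝ → ℝ)
    (hM : ∀ z, M z = (∑ k, ∫ ω, if |X k ω| < z * Bn then (X k ω) ^ 3 else 0) / Bn ^ 3)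
    (hL : ∀ z, L z = (∑ k, ∫ ω, if z * Bn ≤ |X k ω| then (X k ω) ^ 2 else 0) / Bn ^ 2)
    (g₁ : ℝ → ℝ) (hg₁ : ∀ z, g₁ z = max z Bn)
    (ε γ : ℝ) (hε : 0 < ε) (hγ : 0 < γ) :
    1 ≤ γ * (g₁ (ε * Bn) / (ε * g₁ Bn)) * |M ε| +
          sSup ((fun z => g₁ (z * Bn) / g₁ Bn * L z) '' Ioo 0 ε) ∧
    γ * (g₁ (ε * Bn) / (ε * g₁ Bn)) * |M ε| +
          sSup ((fun z => g₁ (z * Bn) / g₁ Bn * L z) '' Ioo 0 ε) ≤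
      max ε 1 * (γ + 1) :=
  rozovskii_fraction_g1_bounds_general X hmeas hint Bn hBn hBdef M L hM hL g₁ hg₁ ε γ hε hγ
end
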